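/- (Bound on ν_max for a single sum constraint.) In the setting where n ≥ 2, L_1, …, L_n > 0, L = Σ_i L_i, M = diag(L_1, …, L_n), A = e^T, S_{(i,j)} = [e_i e_j] with probabilities P_{(i,j)} = (L_i + L_j)/((n−1)L), Z_{S_{(i,j)}} = (1/(L_i+L_j))(e_i − e_j)(e_i − e_j)^T, and Z = (n/((n−1)L))(I_n − (1/n) e e^T), the constant ν_max = max{ (Σ_{i<j} P_{(i,j)} u^T Z_{S_{(i,j)}} Z† Z_{S_{(i,j)}} u) / (u^T Z u) : u ∈ ker(A), u ≠ 0 } satisfies ν_max ≤ max_{i<j} 2(n−1)L / (n (L_i + L_j)). -/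

import Mathlib

open Matrix

-- The Moore–Penrose pseudoinverse of a real matrix, defined via the four
-- Penrose conditions (which have a unique solution for every real matrix).
open Classical in
noncomputable def mpinv {k l : Type*} [Fintype k] [Fintype l] (B : Matrix k l ℝ) :
    Matrix l k ℝ :=
  if h : ∃ X : Matrix l k ℝ,
      B * X * B = B ∧ X * B * X = X ∧ (B * X)ᵀ = B * X ∧ (X * B)ᵀ = X * B
  then h.choose else 0

/-- `P_S = I - (AS)†(AS)`, the orthogonal projection onto `ker(AS)`. -/
noncomputable def Pmat {m n p : ℕ} (A : Matrix (Fin m) (Fin n) ℝ)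
    (S : Matrix (Fin n) (Fin p) ℝ) : Matrix (Fin p) (Fin p) ℝ :=
  1 - mpinv (A * S) * (A * S)

/-- `Z_S = S P_S (P_Sᵀ Sᵀ M S P_S)† P_Sᵀ Sᵀ`. -/
noncomputable def Zmat {m n p : ℕ} (A : Matrix (Fin m) (Fin n) ℝ)
    (M : Matrix (Fin n) (Fin n) ℝ) (S : Matrix (Fin n) (Fin p) ℝ) :
    Matrix (Fin n) (Fin n) ℝ :=
  S * Pmat A S * mpinv ((Pmat A S)ᵀ * Sᵀ * M * S * Pmat A S) * (Pmat A S)ᵀ * Sᵀ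

/-- The gradient of `f : ℝ^n → ℝ`, as a vector of partial derivatives. -/
noncomputable def gradv {n : ℕ} (f : (Fin n → ℝ) → ℝ) (x : Fin n → ℝ) : Fin n → ℝ :=
  fun i => fderiv ℝ f x (Pi.single i 1)

/-! `Z` is the positive multiple `c = n/((n-1)L)` of the centering projection `I - (1/n) e eᵀ`, so
`Z† = c⁻¹ (I - (1/n) e eᵀ)`, and this projection fixes `u ∈ ker eᵀ` as well as `e_i - e_j`.
Hence the `(i,j)` summand of the numerator is `b_ij · (c/n)(u_i - u_j)²` with
`b_ij = 2(n-1)L/(n(L_i + L_j))`, while the denominator is `c ‖u‖² = (c/n) Σ_{i<j} (u_i - u_j)²`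
because `Σ u_i = 0`. The ratio is therefore a convex combination of the `b_ij`, hence at most
their maximum. -/

section MoorePenrose

variable {k l : Type*} [Fintype k] [Fintype l]

theorem eq_of_penrose_conditions {B : Matrix k l ℝ} {X Y : Matrix l k ℝ}
    (h1 : B * X * B = B) (h2 : X * B * X = X) (h3 : (B * X)ᵀ = B * X) (h4 : (X * B)ᵀ = X * B)
    (g1 : B * Y * B = B) (g2 : Y * B * Y = Y) (g3 : (B * Y)ᵀ = B * Y) (g4 : (Y * B)ᵀ = Y * B) :
    X = Y := by
  have hXB : X * B = Y * B :=
    calc X * B = (X * (B * Y * B))ᵀ := by rw [g1, h4]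
      _ = (Y * B)ᵀ * (X * B)ᵀ := by simp only [Matrix.transpose_mul, Matrix.mul_assoc]
      _ = Y * (B * X * B) := by rw [h4, g4]; simp only [Matrix.mul_assoc]
      _ = Y * B := by rw [h1]
  have hBX : B * X = B * Y :=
    calc B * X = ((B * Y * B) * X)ᵀ := by rw [g1, h3]
      _ = (B * X)ᵀ * (B * Y)ᵀ := by simp only [Matrix.transpose_mul, Matrix.mul_assoc]
      _ = (B * X * B) * Y := by rw [h3, g3]; simp only [Matrix.mul_assoc]
      _ = B * Y := by rw [h1]
  calc X = X * B * X := h2.symm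
    _ = Y * B * Y := by rw [hXB, Matrix.mul_assoc, hBX, ← Matrix.mul_assoc]
    _ = Y := g2

theorem mpinv_eq_of_penrose {B : Matrix k l ℝ} {X : Matrix l k ℝ}
    (h1 : B * X * B = B) (h2 : X * B * X = X) (h3 : (B * X)ᵀ = B * X) (h4 : (X * B)ᵀ = X * B) :
    mpinv B = X := by
  have h : ∃ X : Matrix l k ℝ,
      B * X * B = B ∧ X * B * X = X ∧ (B * X)ᵀ = B * X ∧ (X * B)ᵀ = X * B :=
    ⟨X, h1, h2, h3, h4⟩
  rw [mpinv, dif_pos h]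
  obtain ⟨c1, c2, c3, c4⟩ := h.choose_spec
  exact eq_of_penrose_conditions c1 c2 c3 c4 h1 h2 h3 h4

theorem mpinv_smul_of_transpose_eq_of_mul_self_eq {P : Matrix k k ℝ} (hsymm : Pᵀ = P)
    (hidem : P * P = P) {c : ℝ} (hc : c ≠ 0) : mpinv (c • P) = c⁻¹ • P := by
  have hprod : c • P * (c⁻¹ • P) = P := by
    rw [Matrix.smul_mul, Matrix.mul_smul, smul_smul, mul_inv_cancel₀ hc, one_smul, hidem]
  have hprod' : c⁻¹ • P * (c • P) = P := by
    rw [Matrix.smul_mul, Matrix.mul_smul, smul_smul, inv_mul_cancel₀ hc, one_smul, hidem]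
  apply mpinv_eq_of_penrose
  · rw [hprod, Matrix.mul_smul, hidem]
  · rw [hprod', Matrix.mul_smul, hidem]
  · rw [hprod, hsymm]
  · rw [hprod', hsymm]

end MoorePenrose

section Centering

variable {ι : Type*} [Fintype ι] [DecidableEq ι]

noncomputable def centeringMatrix (ι : Type*) [Fintype ι] [DecidableEq ι] : Matrix ι ι ℝ :=
  1 - (1 / (Fintype.card ι : ℝ)) • Matrix.of (fun _ _ => 1)

theorem centeringMatrix_transpose : (centeringMatrix ι)ᵀ = centeringMatrix ι := by
  ext i j
  simp [centeringMatrix, Matrix.one_apply, eq_comm]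

theorem centeringMatrix_mul_self [Nonempty ι] :
    centeringMatrix ι * centeringMatrix ι = centeringMatrix ι := by
  have hJ : (Matrix.of fun _ _ => 1 : Matrix ι ι ℝ) * Matrix.of (fun _ _ => 1) =
      (Fintype.card ι : ℝ) • Matrix.of (fun _ _ => 1) := by
    ext i j; simp [Matrix.mul_apply]
  have hcard : (Fintype.card ι : ℝ) ≠ 0 := by positivity
  simp only [centeringMatrix, Matrix.sub_mul, Matrix.mul_sub, Matrix.one_mul, Matrix.mul_one,
    Matrix.smul_mul, Matrix.mul_smul, hJ, smul_smul, one_div_mul_cancel hcard, one_smul,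
    sub_self, smul_zero, sub_zero]

theorem centeringMatrix_mulVec_of_sum_eq_zero {v : ι → ℝ} (hv : ∑ i, v i = 0) :
    centeringMatrix ι *ᵥ v = v := by
  have hJv : (Matrix.of fun _ _ => 1 : Matrix ι ι ℝ) *ᵥ v = 0 := by
    ext i; simp [Matrix.mulVec, dotProduct, hv]
  rw [centeringMatrix, Matrix.sub_mulVec, Matrix.one_mulVec, Matrix.smul_mulVec, hJv, smul_zero,
    sub_zero]

theorem dotProduct_smul_centeringMatrix_mulVec_self {v : ι → ℝ} (hv : ∑ i, v i = 0) (c : ℝ) :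
    v ⬝ᵥ (c • centeringMatrix ι) *ᵥ v = c * ∑ i, v i ^ 2 := by
  rw [Matrix.smul_mulVec, centeringMatrix_mulVec_of_sum_eq_zero hv, dotProduct_smul, smul_eq_mul]
  simp only [dotProduct, sq]

theorem mpinv_smul_centeringMatrix [Nonempty ι] {c : ℝ} (hc : c ≠ 0) :
    mpinv (c • centeringMatrix ι) = c⁻¹ • centeringMatrix ι :=
  mpinv_smul_of_transpose_eq_of_mul_self_eq centeringMatrix_transpose centeringMatrix_mul_self hc

end Centering

section PairSums

variable {ι : Type*} [Fintype ι]

theorem sum_sum_eq_two_mul_sum_filter_lt [LinearOrder ι] {R : Type*} [NonAssocSemiring R]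
    (g : ι → ι → R) (hsymm : ∀ i j, g i j = g j i) (hdiag : ∀ i, g i i = 0) :
    ∑ i, ∑ j, g i j = 2 * ∑ q : ι × ι with q.1 < q.2, g q.1 q.2 := by
  have hsplit : ∀ i j, g i j = (if i < j then g i j else 0) + (if j < i then g j i else 0) := by
    intro i j
    rcases lt_trichotomy i j with hij | rfl | hij
    · rw [if_pos hij, if_neg hij.not_gt, add_zero]
    · simp [hdiag]
    · rw [if_neg hij.not_gt, if_pos hij, zero_add, hsymm]
  have hupper : ∑ i, ∑ j, (if i < j then g i j else 0) = ∑ q : ι × ι with q.1 < q.2, g q.1 q.2 := by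
    rw [Finset.sum_filter, Fintype.sum_prod_type]
  rw [Finset.sum_congr rfl fun i _ => Finset.sum_congr rfl fun j _ => hsplit i j]
  simp only [Finset.sum_add_distrib]
  rw [Finset.sum_comm (f := fun i j => if j < i then g j i else 0), hupper, two_mul]

theorem sum_sum_sub_sq {R : Type*} [CommRing R] (u : ι → R) :
    ∑ i, ∑ j, (u i - u j) ^ 2 = 2 * Fintype.card ι * ∑ i, u i ^ 2 - 2 * (∑ i, u i) ^ 2 := by
  simp only [sub_sq, Finset.sum_add_distrib, Finset.sum_sub_distrib, Finset.sum_const,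
    Finset.card_univ, nsmul_eq_mul, ← Finset.mul_sum, ← Finset.sum_mul]
  ring

theorem sum_filter_lt_sub_sq_of_sum_eq_zero [LinearOrder ι] {u : ι → ℝ} (hu : ∑ i, u i = 0) :
    ∑ q : ι × ι with q.1 < q.2, (u q.1 - u q.2) ^ 2 = Fintype.card ι * ∑ i, u i ^ 2 := by
  have h := sum_sum_eq_two_mul_sum_filter_lt (fun i j => (u i - u j) ^ 2)
    (fun i j => by ring) (fun i => by ring)
  rw [sum_sum_sub_sq, hu] at h
  linarith

end PairSums

section RankOne

variable {ι : Type*} [Fintype ι] [DecidableEq ι] {i j : ι}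

theorem sum_single_sub_single : ∑ k, (Pi.single i 1 - Pi.single j 1 : ι → ℝ) k = 0 := by
  simp [Finset.sum_sub_distrib]

theorem single_sub_single_dotProduct (u : ι → ℝ) :
    (Pi.single i 1 - Pi.single j 1 : ι → ℝ) ⬝ᵥ u = u i - u j := by
  simp [sub_dotProduct]

theorem single_sub_single_dotProduct_self (hij : i ≠ j) :
    (Pi.single i 1 - Pi.single j 1 : ι → ℝ) ⬝ᵥ (Pi.single i 1 - Pi.single j 1) = 2 := by
  simp [hij, hij.symm]
  norm_num

theorem dotProduct_smul_centeringMatrix_mulVec_rankOne (hij : i ≠ j) (a c : ℝ) (u : ι → ℝ) :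
    let w : ι → ℝ := Pi.single i 1 - Pi.single j 1
    (a • vecMulVec w w) *ᵥ u ⬝ᵥ (c⁻¹ • centeringMatrix ι) *ᵥ ((a • vecMulVec w w) *ᵥ u) =
      2 * a ^ 2 * (u i - u j) ^ 2 / c := by
  intro w
  have hwu : (a • vecMulVec w w) *ᵥ u = (a * (u i - u j)) • w := by
    rw [Matrix.smul_mulVec, vecMulVec_mulVec, single_sub_single_dotProduct, op_smul_eq_smul,
      smul_smul]
  rw [hwu, Matrix.smul_mulVec, Matrix.mulVec_smul,
    centeringMatrix_mulVec_of_sum_eq_zero sum_single_sub_single, smul_dotProduct, smul_smul,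
    dotProduct_smul, single_sub_single_dotProduct_self hij, smul_eq_mul, smul_eq_mul]
  ring

end RankOne

section ConvexCombination

variable {ι : Type*} [Fintype ι]

theorem Finset.sum_mul_le_sup'_mul_sum {α : Type*} {s : Finset α} (hs : s.Nonempty)
    (b w : α → ℝ) (hw : ∀ q ∈ s, 0 ≤ w q) :
    ∑ q ∈ s, b q * w q ≤ s.sup' hs b * ∑ q ∈ s, w q := by
  rw [Finset.mul_sum]
  exact Finset.sum_le_sum fun q hq => mul_le_mul_of_nonneg_right (Finset.le_sup' b hq) (hw q hq)

theorem sum_filter_lt_mul_sub_sq_div_le_sup' [LinearOrder ι] {u : ι → ℝ} (hu : ∑ i, u i = 0)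
    (hu_ne : u ≠ 0) {c : ℝ} (hc : 0 < c) (b : ι × ι → ℝ)
    (hs : (Finset.univ.filter fun q : ι × ι => q.1 < q.2).Nonempty) :
    (∑ q : ι × ι with q.1 < q.2, b q * (c / Fintype.card ι * (u q.1 - u q.2) ^ 2)) /
        (c * ∑ i, u i ^ 2) ≤ Finset.sup' _ hs b := by
  have hnorm_pos : 0 < ∑ i, u i ^ 2 := by
    obtain ⟨i, hi⟩ := Function.ne_iff.mp hu_ne
    exact Finset.sum_pos' (fun j _ => sq_nonneg _) ⟨i, Finset.mem_univ i, pow_two_pos_of_ne_zero hi⟩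
  have hcard : (0 : ℝ) < Fintype.card ι := by
    obtain ⟨i, -⟩ := Function.ne_iff.mp hu_ne
    exact_mod_cast Fintype.card_pos_iff.mpr ⟨i⟩
  rw [div_le_iff₀ (by positivity)]
  calc _ ≤ Finset.sup' _ hs b *
        ∑ q : ι × ι with q.1 < q.2, c / Fintype.card ι * (u q.1 - u q.2) ^ 2 :=
        Finset.sum_mul_le_sup'_mul_sum hs b _ fun q _ => by positivity
    _ = Finset.sup' _ hs b * (c * ∑ i, u i ^ 2) := by
        rw [← Finset.mul_sum, sum_filter_lt_sub_sq_of_sum_eq_zero hu]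
        field_simp

end ConvexCombination

/-- for the single sum constraint with pairwise coordinate sketches,
`ν_max ≤ max_{i<j} 2(n−1)L/(n(L_i + L_j))`. -/
theorem stmt18 {n : ℕ} (hn : 2 ≤ n) (L : Fin n → ℝ) (hL : ∀ i, 0 < L i)
    (Ltot : ℝ) (hLtot : Ltot = ∑ i, L i)
    (Pij : Fin n → Fin n → ℝ)
    (hPij : ∀ i j, Pij i j = (L i + L j) / (((n : ℝ) - 1) * Ltot))
    (Zs : Fin n → Fin n → Matrix (Fin n) (Fin n) ℝ)
    (hZs : ∀ i j : Fin n, Zs i j = (1 / (L i + L j)) •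
      Matrix.vecMulVec (Pi.single i 1 - Pi.single j 1) (Pi.single i 1 - Pi.single j 1))
    (Z : Matrix (Fin n) (Fin n) ℝ)
    (hZ : Z = ((n : ℝ) / (((n : ℝ) - 1) * Ltot)) •
      ((1 : Matrix (Fin n) (Fin n) ℝ) -
        ((1 : ℝ) / (n : ℝ)) • Matrix.of (fun _ _ => (1 : ℝ))))
    (ratioSet : Set ℝ)
    (hratio : ratioSet = {r : ℝ | ∃ u : Fin n → ℝ, (∑ i, u i) = 0 ∧ u ≠ 0 ∧
      r = (∑ q ∈ Finset.univ.filter (fun q : Fin n × Fin n => q.1 < q.2),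
            Pij q.1 q.2 * ((Zs q.1 q.2).mulVec u ⬝ᵥ
              (mpinv Z).mulVec ((Zs q.1 q.2).mulVec u))) / (u ⬝ᵥ Z.mulVec u)})
    (νmax : ℝ) (hν : νmax = sSup ratioSet) :
    νmax ≤ (Finset.univ.filter (fun q : Fin n × Fin n => q.1 < q.2)).sup'
        ⟨(⟨0, by omega⟩, ⟨1, by omega⟩), by
          exact Finset.mem_filter.mpr ⟨Finset.mem_univ _, by exact Fin.mk_lt_mk.mpr one_pos⟩⟩
        (fun q => 2 * ((n : ℝ) - 1) * Ltot / ((n : ℝ) * (L q.1 + L q.2))) := by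
  have hn1 : (0 : ℝ) < n - 1 := by have : (2 : ℝ) ≤ n := mod_cast hn; linarith
  have hLtot_pos : 0 < Ltot :=
    hLtot ▸ Finset.sum_pos (fun i _ => hL i) ⟨⟨0, by omega⟩, Finset.mem_univ _⟩
  set c : ℝ := n / ((n - 1) * Ltot) with hc
  have hc_pos : 0 < c := by positivity
  have hZc : Z = c • centeringMatrix (Fin n) := by rw [hZ, centeringMatrix, Fintype.card_fin]
  have : Nonempty (Fin n) := ⟨⟨0, by omega⟩⟩
  have hZinv : mpinv Z = c⁻¹ • centeringMatrix (Fin n) := by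
    rw [hZc, mpinv_smul_centeringMatrix hc_pos.ne']
  set b : Fin n × Fin n → ℝ := fun q => 2 * ((n : ℝ) - 1) * Ltot / ((n : ℝ) * (L q.1 + L q.2))
  have hterm : ∀ u : Fin n → ℝ, ∀ q ∈ Finset.univ.filter (fun q : Fin n × Fin n => q.1 < q.2),
      Pij q.1 q.2 * ((Zs q.1 q.2) *ᵥ u ⬝ᵥ (mpinv Z) *ᵥ ((Zs q.1 q.2) *ᵥ u)) =
        b q * (c / Fintype.card (Fin n) * (u q.1 - u q.2) ^ 2) := by
    intro u q hq
    have hLq : 0 < L q.1 + L q.2 := add_pos (hL _) (hL _)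
    rw [hZs, hZinv, dotProduct_smul_centeringMatrix_mulVec_rankOne
      (Finset.mem_filter.mp hq).2.ne, hPij, hc, Fintype.card_fin]
    simp only [b]
    field_simp
  rw [hν, hratio]
  refine Real.sSup_le ?_ (Finset.le_sup'_of_le b (b := (⟨0, by omega⟩, ⟨1, by omega⟩))
    (Finset.mem_filter.mpr ⟨Finset.mem_univ _, Fin.mk_lt_mk.mpr one_pos⟩)
    (by have := hL ⟨0, by omega⟩; have := hL ⟨1, by omega⟩; positivity))
  rintro _ ⟨u, hu, hu_ne, rfl⟩
  rw [Finset.sum_congr rfl (hterm u), hZc, dotProduct_smul_centeringMatrix_mulVec_self hu]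
  exact sum_filter_lt_mul_sub_sq_div_le_sup' hu hu_ne hc_pos b _
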